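/- arXiv:1506.03518 — 5 statements merged into one kernel-verified Lean document; each statement's English description precedes it below -/
import Mathlib

section
/- Let m ≥ 1 be an integer, let α > β > 0 with r := β/α ∈ (0,1), and let 0 = h_0 < h_1 < ... < h_m be real numbers. Define w_l := α h_{l+1} − β h_l for l = 0,...,m−1. Then max_{l ∈ {0,...,m−1}} w_l ≥ h_m α (1 − r)/(1 − r^m). -/
/-- Lemma 2 (even N case): worst-case expansion rate lower bound. -/
theorem stmt1 (m : ℕ) (hm : 1 ≤ m) (α β : ℝ) (hβ : 0 < β) (hαβ : β < α)
    (h : ℕ → ℝ) (h0 : h 0 = 0)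
    (hmono : ∀ l, l < m → h l < h (l + 1)) :
    (Finset.range m).sup' (Finset.nonempty_range_iff.mpr (by omega))
      (fun l => α * h (l + 1) - β * h l)
      ≥ h m * α * (1 - β / α) / (1 - (β / α) ^ m) := by
  have hα : (0:ℝ) < α := hβ.trans hαβ
  set r := β / α with hr
  have hr0 : 0 < r := div_pos hβ hα
  have hr1 : r < 1 := (div_lt_one hα).mpr hαβ
  have hrm : r ^ m < 1 := pow_lt_one₀ hr0.le hr1 (by omega)
  set W := (Finset.range m).sup' (Finset.nonempty_range_iff.mpr (by omega))
      (fun l => α * h (l + 1) - β * h l) with hWdef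
  have hWle : ∀ l, l < m → α * h (l + 1) - β * h l ≤ W := fun l hl =>
    Finset.le_sup' (fun l => α * h (l + 1) - β * h l) (Finset.mem_range.mpr hl)
  have key : ∀ l, l ≤ m → h l ≤ W * (∑ i ∈ Finset.range l, r ^ i) / α := by
    intro l
    induction l with
    | zero => intro _; simp [h0]
    | succ l ih =>
      intro hlm
      have hl : l < m := hlm
      have h1 := hWle l hl
      have h2 := ih hl.le
      have hs : 0 ≤ ∑ i ∈ Finset.range l, r ^ i :=
        Finset.sum_nonneg fun i _ => by positivity
      have hrα : r * α = β := div_mul_cancel₀ β hα.ne'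
      rw [geom_sum_succ, le_div_iff₀ hα]
      rw [le_div_iff₀ hα] at h2
      have h4 : r * α * (W * ∑ i ∈ Finset.range l, r ^ i)
          = β * (W * ∑ i ∈ Finset.range l, r ^ i) := by rw [hrα]
      have hgoal : h (l + 1) * α * α
          ≤ W * (r * ∑ i ∈ Finset.range l, r ^ i + 1) * α := by
        nlinarith [mul_le_mul_of_nonneg_left h2 hβ.le,
          mul_le_mul_of_nonneg_right h1 hα.le]
      exact le_of_mul_le_mul_right hgoal hα
  have hm' := key m le_rfl
  have hgs : (∑ i ∈ Finset.range m, r ^ i) = (1 - r ^ m) / (1 - r) := by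
    rw [geom_sum_eq hr1.ne, div_eq_div_iff (by linarith) (by linarith)]
    ring
  rw [hgs, le_div_iff₀ hα, ← mul_div_assoc,
    le_div_iff₀ (by linarith : (0:ℝ) < 1 - r)] at hm'
  rw [ge_iff_le, div_le_iff₀ (by linarith)]
  linarith
end

section
/- Let m > m' ≥ 1 be integers, α > β > 0 with r := β/α ∈ (0,1), and h_{m'} < h_{m'+1} < ... < h_m positive reals. Define w_l := α h_{l+1} − β h_l. Then max_{l ∈ {m',...,m−1}} w_l ≥ (h_m − r^{m−m'} h_{m'}) α (1 − r)/(1 − r^{m−m'}). -/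
/-- Lemma 2, inequality (17): lower bound on the worst-case expansion
    rate over the sub-range [h_{m'}, h_m]. -/
theorem stmt2 (m' m : ℕ) (h1 : 1 ≤ m') (hmm : m' < m) (α β : ℝ)
    (hβ : 0 < β) (hαβ : β < α)
    (h : ℕ → ℝ) (hpos : ∀ l, m' ≤ l → l ≤ m → 0 < h l)
    (hmono : ∀ l, m' ≤ l → l < m → h l < h (l + 1)) :
    (Finset.Ico m' m).sup' (Finset.nonempty_Ico.mpr hmm)
      (fun l => α * h (l + 1) - β * h l)
      ≥ (h m - (β / α) ^ (m - m') * h m') * α * (1 - β / α)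
        / (1 - (β / α) ^ (m - m')) := by
  have hα : 0 < α := hβ.trans hαβ
  set r := β / α with hr
  have hr0 : 0 < r := div_pos hβ hα
  have hr1 : r < 1 := (div_lt_one hα).mpr hαβ
  have hrα : r * α = β := div_mul_cancel₀ β hα.ne'
  set n := m - m' with hn
  have hmn : m' + n = m := by omega
  set W := (Finset.Ico m' m).sup' (Finset.nonempty_Ico.mpr hmm)
      (fun l => α * h (l + 1) - β * h l) with hW
  have hWle : ∀ l, m' ≤ l → l < m → α * h (l + 1) - β * h l ≤ W := by
    intro l hl1 hl2
    exact Finset.le_sup' (fun l => α * h (l + 1) - β * h l) (Finset.mem_Ico.mpr ⟨hl1, hl2⟩)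
  have key : ∀ k, k ≤ n →
      α * h (m' + k) ≤ W * (∑ i ∈ Finset.range k, r ^ i) + α * r ^ k * h m' := by
    intro k hk
    induction k with
    | zero => simp
    | succ k ih =>
      have ih' := ih (Nat.le_of_succ_le hk)
      have h1' : α * h (m' + k + 1) - β * h (m' + k) ≤ W :=
        hWle (m' + k) (Nat.le_add_right _ _) (by omega)
      have hmul := mul_le_mul_of_nonneg_left ih' hr0.le
      have hgs : (∑ i ∈ Finset.range (k + 1), r ^ i)
          = r * (∑ i ∈ Finset.range k, r ^ i) + 1 := geom_sum_succ
      have : α * h (m' + (k + 1))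
          = (α * h (m' + k + 1) - β * h (m' + k)) + r * (α * h (m' + k)) := by
        have : m' + (k + 1) = m' + k + 1 := by omega
        rw [this, ← hrα]; ring
      rw [this, hgs]
      have e : r * (W * (∑ i ∈ Finset.range k, r ^ i) + α * r ^ k * h m')
          = W * (r * (∑ i ∈ Finset.range k, r ^ i)) + α * r ^ (k + 1) * h m' := by ring
      rw [e] at hmul
      linarith [hmul, h1']
  have hkey := key n le_rfl
  rw [hmn] at hkey
  have hrn1 : r ^ n < 1 := pow_lt_one₀ hr0.le hr1 (by omega)
  have hS : (∑ i ∈ Finset.range n, r ^ i) * (1 - r) = 1 - r ^ n := by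
    have := geom_sum_mul r n
    nlinarith [this]
  rw [ge_iff_le, div_le_iff₀ (by linarith : (0:ℝ) < 1 - r ^ n)]
  have hmul2 := mul_le_mul_of_nonneg_right hkey (by linarith : (0:ℝ) ≤ 1 - r)
  have e : (W * (∑ i ∈ Finset.range n, r ^ i) + α * r ^ n * h m') * (1 - r)
      = W * ((∑ i ∈ Finset.range n, r ^ i) * (1 - r)) + α * r ^ n * h m' * (1 - r) := by ring
  rw [e, hS] at hmul2
  nlinarith [hmul2]
end

section
/- Suppose α > β > 0 with r := β/α ∈ (0,1), m ≥ 1 an integer, and two increasing sequences h_0 = ĥ_0 = 0 and h_m = ĥ_m with ĥ_l := h_m(1 − r^l)/(1 − r^m) for l = 0,...,m. If max_{l} (α h_{l+1} − β h_l) < α ĥ_1 (the common expansion rate of the ĥ quantizer), then by induction h_l < ĥ_l for all l = 1,...,m, contradicting h_m = ĥ_m. Hence no quantizer achieves a strictly smaller worst-case rate than the nonuniform one. -/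
/-- Contradiction argument of Lemma 2: no quantizer achieves a strictly smaller
    worst-case expansion rate than the nonuniform optimal one. -/
theorem stmt4 (m : ℕ) (hm : 1 ≤ m) (α β r : ℝ) (hβ : 0 < β) (hαβ : β < α)
    (hr : r = β / α)
    (h hhat : ℕ → ℝ) (h0 : h 0 = 0) (hhat0 : hhat 0 = 0)
    (hhatdef : ∀ l, l ≤ m → hhat l = h m * (1 - r ^ l) / (1 - r ^ m))
    (hend : h m = hhat m)
    (hlt : ∀ l, l < m → α * h (l + 1) - β * h l < α * hhat 1) :
    False := by
  have hα : (0:ℝ) < α := hβ.trans hαβ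
  have hr0 : 0 < r := by rw [hr]; positivity
  have hr1 : r < 1 := by rw [hr]; exact (div_lt_one hα).2 hαβ
  have hrm : r ^ m < 1 := pow_lt_one₀ hr0.le hr1 (by omega)
  have hD : (1 : ℝ) - r ^ m ≠ 0 := by linarith
  have hβα : β = r * α := by rw [hr]; field_simp
  have key : ∀ l, l ≤ m → 1 ≤ l → h l < hhat l := by
    intro l
    induction l with
    | zero => omega
    | succ n ih =>
      intro hle _
      have hn : n < m := hle
      have hstep := hlt n hn
      have hid : α * hhat (n + 1) = β * hhat n + α * hhat 1 := by
        rw [hhatdef (n+1) hle, hhatdef n (by omega), hhatdef 1 hm, hβα]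
        field_simp
        ring
      rcases Nat.eq_zero_or_pos n with h0n | h1n
      · subst h0n
        rw [h0] at hstep
        nlinarith
      · have hprev := ih (by omega) h1n
        nlinarith
  have := key m le_rfl hm
  linarith [hend.le]
end

section
/- Let Y⁻ = [y₁, y₂] be a real interval, B = [b*−δ, b*+δ] with b* > 0, δ ≥ 0, b*−δ > 0. For any u ∈ ℝ define S(u) := sup{|y + b u| : y ∈ Y⁻, b ∈ B}. Then S(u) is minimized at u* := −c(Y⁻)/b* where c(Y⁻) = (y₁+y₂)/2, and the minimum value equals μ(Y⁻)/2 + (δ/b*)|c(Y⁻)|, where μ(Y⁻) = y₂ − y₁. -/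
lemma keySup (y₁ y₂ c₁ c₂ u : ℝ) (hY : y₁ ≤ y₂) (hc : c₁ ≤ c₂) :
    sSup {z : ℝ | ∃ y ∈ Set.Icc y₁ y₂, ∃ c ∈ Set.Icc c₁ c₂, z = |y + c * u|}
      = max |y₁ + min (c₁ * u) (c₂ * u)| |y₂ + max (c₁ * u) (c₂ * u)| := by
  have hbound : ∀ z ∈ {z : ℝ | ∃ y ∈ Set.Icc y₁ y₂, ∃ c ∈ Set.Icc c₁ c₂, z = |y + c * u|},
      z ≤ max |y₁ + min (c₁ * u) (c₂ * u)| |y₂ + max (c₁ * u) (c₂ * u)| := by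
    rintro z ⟨y, hy, c, hcc, rfl⟩
    have h1 : min (c₁ * u) (c₂ * u) ≤ c * u ∧ c * u ≤ max (c₁ * u) (c₂ * u) := by
      rcases le_total 0 u with hu | hu
      · exact ⟨le_trans (min_le_left _ _) (mul_le_mul_of_nonneg_right hcc.1 hu),
          le_trans (mul_le_mul_of_nonneg_right hcc.2 hu) (le_max_right _ _)⟩
      · exact ⟨le_trans (min_le_right _ _) (mul_le_mul_of_nonpos_right hcc.2 hu),
          le_trans (mul_le_mul_of_nonpos_right hcc.1 hu) (le_max_left _ _)⟩
    rcases abs_cases (y + c * u) with ⟨h, _⟩ | ⟨h, _⟩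
    · rw [h]
      exact le_max_of_le_right (le_trans (by linarith [hy.2, h1.2]) (le_abs_self _))
    · rw [h]
      exact le_max_of_le_left (le_trans (by linarith [hy.1, h1.1]) (neg_le_abs _))
  have hm : |y₁ + min (c₁ * u) (c₂ * u)| ∈
      {z : ℝ | ∃ y ∈ Set.Icc y₁ y₂, ∃ c ∈ Set.Icc c₁ c₂, z = |y + c * u|} := by
    rcases le_total 0 u with hu | hu
    · exact ⟨y₁, ⟨le_refl _, hY⟩, c₁, ⟨le_refl _, hc⟩, by
        rw [min_eq_left (mul_le_mul_of_nonneg_right hc hu)]⟩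
    · exact ⟨y₁, ⟨le_refl _, hY⟩, c₂, ⟨hc, le_refl _⟩, by
        rw [min_eq_right (mul_le_mul_of_nonpos_right hc hu)]⟩
  have hM : |y₂ + max (c₁ * u) (c₂ * u)| ∈
      {z : ℝ | ∃ y ∈ Set.Icc y₁ y₂, ∃ c ∈ Set.Icc c₁ c₂, z = |y + c * u|} := by
    rcases le_total 0 u with hu | hu
    · exact ⟨y₂, ⟨hY, le_refl _⟩, c₂, ⟨hc, le_refl _⟩, by
        rw [max_eq_right (mul_le_mul_of_nonneg_right hc hu)]⟩
    · exact ⟨y₂, ⟨hY, le_refl _⟩, c₁, ⟨le_refl _, hc⟩, by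
        rw [max_eq_left (mul_le_mul_of_nonpos_right hc hu)]⟩
  have hbdd : BddAbove {z : ℝ | ∃ y ∈ Set.Icc y₁ y₂, ∃ c ∈ Set.Icc c₁ c₂, z = |y + c * u|} :=
    ⟨_, hbound⟩
  exact le_antisymm (csSup_le ⟨_, hm⟩ hbound)
    (max_le (le_csSup hbdd hm) (le_csSup hbdd hM))

/-- Inequality (25): the optimal input u* = -c(Y⁻)/b* minimizes the worst-case
    magnitude over the prediction set and actuator uncertainty, with minimum
    μ(Y⁻)/2 + (δ/b*)|c(Y⁻)|. -/
theorem stmt12 (y₁ y₂ b δ : ℝ) (hY : y₁ ≤ y₂) (hb : 0 < b) (hδ : 0 ≤ δ)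
    (hbδ : 0 < b - δ) :
    (∀ u : ℝ,
      sSup {z : ℝ | ∃ y ∈ Set.Icc y₁ y₂, ∃ c ∈ Set.Icc (b - δ) (b + δ),
          z = |y + c * (-((y₁ + y₂) / 2) / b)|}
        ≤ sSup {z : ℝ | ∃ y ∈ Set.Icc y₁ y₂, ∃ c ∈ Set.Icc (b - δ) (b + δ),
          z = |y + c * u|})
    ∧ sSup {z : ℝ | ∃ y ∈ Set.Icc y₁ y₂, ∃ c ∈ Set.Icc (b - δ) (b + δ),
          z = |y + c * (-((y₁ + y₂) / 2) / b)|}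
        = (y₂ - y₁) / 2 + (δ / b) * |(y₁ + y₂) / 2| := by
  have hc : b - δ ≤ b + δ := by linarith
  set q : ℝ := (y₁ + y₂) / 2 / b with hqdef
  have h2 : y₁ + y₂ = 2 * (b * q) := by
    rw [hqdef]; field_simp
  have habsc : |(y₁ + y₂) / 2| = b * |q| := by
    have : (y₁ + y₂) / 2 = b * q := by linarith
    rw [this, abs_mul, abs_of_pos hb]
  have hT : (y₂ - y₁) / 2 + (δ / b) * |(y₁ + y₂) / 2| = (y₂ - y₁) / 2 + δ * |q| := by
    rw [habsc]; field_simp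
  have hustar : -((y₁ + y₂) / 2) / b = -q := by rw [hqdef]; ring
  -- value at u* = -q
  have hval : sSup {z : ℝ | ∃ y ∈ Set.Icc y₁ y₂, ∃ c ∈ Set.Icc (b - δ) (b + δ),
          z = |y + c * (-((y₁ + y₂) / 2) / b)|}
        = (y₂ - y₁) / 2 + δ * |q| := by
    rw [hustar, keySup y₁ y₂ (b - δ) (b + δ) (-q) hY hc]
    rcases le_total 0 q with hq | hq
    · have hqd : 0 ≤ δ * q := mul_nonneg hδ hq
      have hord : (b + δ) * (-q) ≤ (b - δ) * (-q) := by nlinarith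
      rw [min_eq_right hord, max_eq_left hord, abs_of_nonneg hq,
        abs_of_nonpos (by nlinarith : y₁ + (b + δ) * (-q) ≤ 0),
        abs_of_nonneg (by nlinarith : 0 ≤ y₂ + (b - δ) * (-q))]
      have e1 : -(y₁ + (b + δ) * (-q)) = (y₂ - y₁) / 2 + δ * q := by nlinarith
      have e2 : y₂ + (b - δ) * (-q) = (y₂ - y₁) / 2 + δ * q := by nlinarith
      rw [e1, e2, max_self]
    · have hqd : 0 ≤ δ * (-q) := mul_nonneg hδ (by linarith)
      have hord : (b - δ) * (-q) ≤ (b + δ) * (-q) := by nlinarith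
      rw [min_eq_left hord, max_eq_right hord, abs_of_nonpos hq,
        abs_of_nonpos (by nlinarith : y₁ + (b - δ) * (-q) ≤ 0),
        abs_of_nonneg (by nlinarith : 0 ≤ y₂ + (b + δ) * (-q))]
      have e1 : -(y₁ + (b - δ) * (-q)) = (y₂ - y₁) / 2 + δ * (-q) := by nlinarith
      have e2 : y₂ + (b + δ) * (-q) = (y₂ - y₁) / 2 + δ * (-q) := by nlinarith
      rw [e1, e2, max_self]
  constructor
  · intro u
    rw [hval, keySup y₁ y₂ (b - δ) (b + δ) u hY hc]
    set m : ℝ := min ((b - δ) * u) ((b + δ) * u) with hmdef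
    set M : ℝ := max ((b - δ) * u) ((b + δ) * u) with hMdef
    have hm1 : m ≤ (b - δ) * u := min_le_left _ _
    have hm2 : m ≤ (b + δ) * u := min_le_right _ _
    have hM1 : (b - δ) * u ≤ M := le_max_left _ _
    have hM2 : (b + δ) * u ≤ M := le_max_right _ _
    have hwidth : 2 * δ * |u| ≤ M - m := by
      rcases le_total 0 u with hu | hu
      · rw [abs_of_nonneg hu]; linarith
      · rw [abs_of_nonpos hu]; linarith
    have hMb : -((b - δ) * |u|) ≤ M := by
      rcases le_total 0 u with hu | hu
      · rw [abs_of_nonneg hu]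
        have := mul_nonneg hbδ.le hu
        linarith
      · rw [abs_of_nonpos hu]; linarith
    have hmb : m ≤ (b - δ) * |u| := by
      rcases le_total 0 u with hu | hu
      · rw [abs_of_nonneg hu]; exact hm1
      · rw [abs_of_nonpos hu]
        have h3 : (b + δ) * u ≤ 0 :=
          mul_nonpos_of_nonneg_of_nonpos (by linarith) hu
        have h4 : 0 ≤ (b - δ) * -u := mul_nonneg hbδ.le (by linarith)
        linarith
    rcases le_total |q| |u| with hqu | hqu
    · have hd : δ * |q| ≤ δ * |u| := mul_le_mul_of_nonneg_left hqu hδ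
      have hA := neg_le_abs (y₁ + m)
      have hB := le_abs_self (y₂ + M)
      have hL := le_max_left |y₁ + m| |y₂ + M|
      have hR := le_max_right |y₁ + m| |y₂ + M|
      linarith
    · have hd : (b - δ) * |u| ≤ (b - δ) * |q| := mul_le_mul_of_nonneg_left hqu (le_of_lt hbδ)
      rcases le_total 0 q with hq | hq
      · -- use y₂ + M ≥ T
        have hqq : |q| = q := abs_of_nonneg hq
        have hB := le_abs_self (y₂ + M)
        have hR := le_max_right |y₁ + m| |y₂ + M|
        rw [hqq] at hd ⊢
        linarith
      · -- use -(y₁ + m) ≥ T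
        have hqq : |q| = -q := abs_of_nonpos hq
        have hA := neg_le_abs (y₁ + m)
        have hL := le_max_left |y₁ + m| |y₂ + M|
        rw [hqq] at hd ⊢
        linarith
  · rw [hval, hT]
end

section
/- For the scalar plant y_{k+1} = a_k y_k + b_k u_k with a_k ∈ [a*−ε, a*+ε], b_k ∈ [b*−δ, b*+δ], under the control law u_k = −c(Y⁻_{k+1})/b* and scaling update σ_{k+1} = μ(Y⁻_{k+1}) + (2δ/|b*|)|c(Y⁻_{k+1})|, every admissible output satisfies |y_{k+1}| ≤ σ_{k+1}/2, i.e., |a y + b u_k| ≤ σ_{k+1}/2 for all a ∈ [a*−ε, a*+ε], y ∈ Y_k, b ∈ [b*−δ, b*+δ], where Y⁻_{k+1} = {a y : a ∈ [a*−ε,a*+ε], y ∈ Y_k}. -/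
/-- Non-saturation of the quantizer for the proposed controller (scalar case):
    with u = -c(Y⁻)/b* and σ = μ(Y⁻) + (2δ/|b*|)|c(Y⁻)|, every admissible
    output a y + b u lies in [-σ/2, σ/2]. -/
theorem stmt19 (a b ε δ y₁ y₂ : ℝ) (hε : 0 ≤ ε) (hδ : 0 ≤ δ)
    (hbδ : 0 < |b| - δ) (hY : y₁ ≤ y₂) :
    let Ym : Set ℝ := Set.image2 (· * ·) (Set.Icc (a - ε) (a + ε))
      (Set.Icc y₁ y₂)
    let cY := (sInf Ym + sSup Ym) / 2
    let u := -cY / b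
    let σ := (sSup Ym - sInf Ym) + (2 * δ / |b|) * |cY|
    ∀ p ∈ Set.Icc (a - ε) (a + ε), ∀ y ∈ Set.Icc y₁ y₂,
      ∀ q ∈ Set.Icc (b - δ) (b + δ), |p * y + q * u| ≤ σ / 2 := by
  intro Ym cY u σ p hp y hy q hq
  have hb : b ≠ 0 := by
    intro h
    simp [h, abs_zero] at hbδ
    linarith
  have hbpos : 0 < |b| := lt_of_le_of_lt hδ (by linarith)
  have hcomp : IsCompact Ym := by
    have : Ym = (fun x : ℝ × ℝ => x.1 * x.2) '' (Set.Icc (a - ε) (a + ε) ×ˢ Set.Icc y₁ y₂) := by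
      rw [Set.image_prod]
    rw [this]
    exact ((isCompact_Icc).prod isCompact_Icc).image (continuous_fst.mul continuous_snd)
  have hmem : p * y ∈ Ym := Set.mem_image2_of_mem hp hy
  have hne : Ym.Nonempty := ⟨p * y, hmem⟩
  have h1 : sInf Ym ≤ p * y := csInf_le hcomp.bddBelow hmem
  have h2 : p * y ≤ sSup Ym := le_csSup hcomp.bddAbove hmem
  have hqb : |b - q| ≤ δ := by
    rw [abs_le]; constructor <;> [linarith [hq.2]; linarith [hq.1]]
  have key : p * y + q * u = (p * y - cY) + cY * (b - q) / b := by
    show p * y + q * (-cY / b) = _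
    field_simp
    ring
  have b1 : |p * y - cY| ≤ (sSup Ym - sInf Ym) / 2 := by
    rw [abs_le]
    constructor <;> · show _ ≤ _; unfold cY; linarith
  have b2 : |cY * (b - q) / b| ≤ δ / |b| * |cY| := by
    rw [abs_div, abs_mul]
    rw [div_le_iff₀ hbpos, div_mul_eq_mul_div, div_mul_cancel₀ _ (ne_of_gt hbpos)]
    calc |cY| * |b - q| ≤ |cY| * δ := by
          exact mul_le_mul_of_nonneg_left hqb (abs_nonneg _)
      _ = δ * |cY| := by ring
  calc |p * y + q * u| ≤ |p * y - cY| + |cY * (b - q) / b| := by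
        rw [key]; exact abs_add_le _ _
    _ ≤ (sSup Ym - sInf Ym) / 2 + δ / |b| * |cY| := add_le_add b1 b2
    _ = σ / 2 := by unfold σ; field_simp
end
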